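/- Let X^n be the stationary geometric-sticky Markov chain with parameter α and base distribution p. For distinct x, y ∈ X and 2 ≤ m ≤ n−1, the probability that X_m = x, that x appears nowhere else, and that y appears nowhere in X^n equals (1−α)²·p_x·(1−p_x−p_y)²·(1−(1−α)(p_x+p_y))^{n−3}. -/

import Mathlib

/-!
For a sticky step from `v`, the mass landing in a set `S'` is `α·1[v ∈ S'] + (1-α)·p(S')`,
which depends on `v` only through whether `v ∈ S'`. Constrain the path to the tube
`A, …, A, {a}, A, …, A` with `A = X \ {a, b}`: along the tube this mass is constant at
each step, so the probability factorises as `p(A)` for the first letter, `(1-α)p_a` for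
entering `a`, `(1-α)p(A)` for leaving it, and `α + (1-α)p(A) = 1 - (1-α)(p_a + p_b)` for
each of the remaining `n - 3` steps.
-/
open scoped Classical

/-- The probability that the stationary geometric-sticky Markov chain with stickiness
parameter `α` and base distribution `p` (i.e. `X_1 ~ p` and
`Pr(X_i = z | X_{i-1} = y) = α·1[z=y] + (1-α)·p z`) produces the sample path `x`. -/
noncomputable def stickyProb {X : Type*} [DecidableEq X] (α : ℝ) (p : X → ℝ) {n : ℕ}
    (x : Fin n → X) : ℝ :=
  (if h : 0 < n then p (x ⟨0, h⟩) else 1) *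
  ∏ i : Fin n, if i.val = 0 then 1 else
    ((if x i = x ⟨i.val - 1, lt_of_le_of_lt (Nat.pred_le _) i.isLt⟩ then α else 0)
      + (1 - α) * p (x i))

open Finset

theorem Finset.prod_eq_mul_mul_pow_card_sub_two {ι M : Type*} [DecidableEq ι] [CommMonoid M]
    {s : Finset ι} {i j : ι} (hi : i ∈ s) (hj : j ∈ s) (hij : i ≠ j) {f : ι → M} {r : M}
    (hf : ∀ l ∈ s, l ≠ i → l ≠ j → f l = r) :
    ∏ l ∈ s, f l = f i * f j * r ^ (#s - 2) := by
  have hj' : j ∈ s.erase i := mem_erase.2 ⟨hij.symm, hj⟩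
  rw [← mul_prod_erase s f hi, ← mul_prod_erase _ f hj', mul_assoc,
    prod_congr rfl fun l hl => hf l (mem_of_mem_erase (mem_of_mem_erase hl))
      (ne_of_mem_erase (mem_of_mem_erase hl)) (ne_of_mem_erase hl),
    prod_const, card_erase_of_mem hj', card_erase_of_mem hi, Nat.sub_sub]

section StickyChain

variable {X : Type*} [DecidableEq X] (α : ℝ) (p : X → ℝ)

noncomputable def stickyTrans (v z : X) : ℝ :=
  (if z = v then α else 0) + (1 - α) * p z

theorem stickyProb_snoc {k : ℕ} (y : Fin (k + 1) → X) (z : X) :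
    stickyProb α p (Fin.snoc y z : Fin (k + 2) → X)
      = stickyProb α p y * stickyTrans α p (y (Fin.last k)) z := by
  have hsnoc : ∀ j (hj : j < k + 1) (hj' : j < k + 2),
      (Fin.snoc y z : Fin (k + 2) → X) ⟨j, hj'⟩ = y ⟨j, hj⟩ :=
    fun j hj _ => Fin.snoc_castSucc (α := fun _ => X) z y ⟨j, hj⟩
  have hprev : ∀ (i : Fin (k + 1)) (hi : i.val - 1 < k + 2),
      (Fin.snoc y z : Fin (k + 2) → X) ⟨i.val - 1, hi⟩
        = y ⟨i.val - 1, lt_of_le_of_lt (Nat.pred_le _) i.isLt⟩ :=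
    fun i => hsnoc _ _
  have hlast : (Fin.snoc y z : Fin (k + 2) → X) ⟨k, k.lt_succ_self.trans (k + 1).lt_succ_self⟩
      = y (Fin.last k) :=
    hsnoc k k.lt_succ_self _
  unfold stickyProb
  rw [dif_pos k.succ_pos, dif_pos (k + 1).succ_pos, Fin.prod_univ_castSucc]
  simp only [Fin.val_castSucc, Fin.snoc_castSucc, Fin.snoc_last, Fin.val_last,
    Nat.add_sub_cancel, Nat.succ_ne_zero, if_false, stickyTrans, hsnoc 0 k.succ_pos,
    hlast, hprev]
  ring

theorem sum_stickyTrans (s : Finset X) (v : X) :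
    ∑ z ∈ s, stickyTrans α p v z = (if v ∈ s then α else 0) + (1 - α) * ∑ z ∈ s, p z := by
  simp only [stickyTrans, sum_add_distrib, ← mul_sum, sum_ite_eq']

variable [Fintype X]

/-- Indices are zero-based: `S i` constrains the paper's `X_{i+1}`. -/
noncomputable def stickyTubeProb (S : ℕ → Finset X) (n : ℕ) : ℝ :=
  ∑ x : Fin n → X, if ∀ i : Fin n, x i ∈ S i then stickyProb α p x else 0

variable (S : ℕ → Finset X)

theorem stickyTubeProb_one : stickyTubeProb α p S 1 = ∑ z ∈ S 0, p z := by
  rw [stickyTubeProb, ← (Equiv.funUnique (Fin 1) X).symm.sum_comp, ← sum_filter]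
  simp [stickyProb]

theorem stickyTubeProb_succ {k : ℕ} {c : ℝ}
    (hc : ∀ v ∈ S k, ∑ z ∈ S (k + 1), stickyTrans α p v z = c) :
    stickyTubeProb α p S (k + 2) = stickyTubeProb α p S (k + 1) * c := by
  have hsnoc : ∀ q : X × (Fin (k + 1) → X), Fin.snocEquiv (fun _ => X) q = Fin.snoc q.2 q.1 :=
    fun _ => rfl
  have hmem : ∀ (y : Fin (k + 1) → X) (z : X),
      (∀ i : Fin (k + 2), (Fin.snoc y z : Fin (k + 2) → X) i ∈ S i)
        ↔ (∀ i : Fin (k + 1), y i ∈ S i) ∧ z ∈ S (k + 1) := by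
    simp [Fin.forall_fin_succ' (n := k + 1)]
  rw [stickyTubeProb, ← (Fin.snocEquiv fun _ => X).sum_comp, Fintype.sum_prod_type, sum_comm,
    stickyTubeProb, sum_mul]
  refine sum_congr rfl fun y _ => ?_
  simp only [hsnoc, hmem, stickyProb_snoc]
  by_cases hy : ∀ i : Fin (k + 1), y i ∈ S i
  · simp only [and_iff_right hy, if_pos hy]
    rw [sum_ite_mem, univ_inter, ← mul_sum, hc _ (hy (Fin.last k))]
  · simp [hy]

theorem stickyTubeProb_eq_mul_prod {k : ℕ} (c : ℕ → ℝ)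
    (hc : ∀ j < k, ∀ v ∈ S j, ∑ z ∈ S (j + 1), stickyTrans α p v z = c j) :
    stickyTubeProb α p S (k + 1) = (∑ z ∈ S 0, p z) * ∏ j ∈ range k, c j := by
  induction k with
  | zero => simp [stickyTubeProb_one]
  | succ k ih =>
    rw [stickyTubeProb_succ α p S (hc k k.lt_succ_self),
      ih fun j hj => hc j (hj.trans k.lt_succ_self), prod_range_succ, mul_assoc]

theorem stickyTubeProb_update_singleton {a : X} {A : Finset X} (ha : a ∉ A) {t k : ℕ}
    (ht : 1 ≤ t) (htk : t < k) :
    stickyTubeProb α p (Function.update (fun _ => A) t {a}) (k + 1)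
      = (∑ z ∈ A, p z) * ((1 - α) * p a) * ((1 - α) * ∑ z ∈ A, p z)
          * (α + (1 - α) * ∑ z ∈ A, p z) ^ (k - 2) := by
  set S : ℕ → Finset X := Function.update (fun _ => A) t {a}
  set r := α + (1 - α) * ∑ z ∈ A, p z
  -- the mass of the step `j → j + 1`: entering `a`, leaving `a`, or staying in `A`
  set c : ℕ → ℝ := fun j => if j = t - 1 then (1 - α) * p a
    else if j = t then (1 - α) * ∑ z ∈ A, p z else r
  have hc₁ : c (t - 1) = (1 - α) * p a := if_pos rfl
  have hc₂ : c t = (1 - α) * ∑ z ∈ A, p z := (if_neg (by omega : t ≠ t - 1)).trans (if_pos rfl)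
  have hS_of_ne : ∀ {j}, j ≠ t → S j = A := fun hj => Function.update_of_ne hj _ _
  have hS : S t = {a} := Function.update_self _ _ _
  have htrans : ∀ j < k, ∀ v ∈ S j, ∑ z ∈ S (j + 1), stickyTrans α p v z = c j := by
    intro j _ v hv
    rw [sum_stickyTrans]
    obtain rfl | rfl | ⟨h₁, h₂⟩ : j = t - 1 ∨ j = t ∨ (j ≠ t - 1 ∧ j ≠ t) := by omega
    · rw [hS_of_ne (by omega)] at hv
      rw [Nat.sub_add_cancel ht, hS, if_neg (by simpa using ne_of_mem_of_not_mem hv ha),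
        sum_singleton, hc₁, zero_add]
    · rw [hS, mem_singleton] at hv
      rw [hS_of_ne (by omega), if_neg (hv ▸ ha), hc₂, zero_add]
    · rw [hS_of_ne h₂] at hv
      rw [hS_of_ne (by omega), if_pos hv]
      exact ((if_neg h₁).trans (if_neg h₂)).symm
  rw [stickyTubeProb_eq_mul_prod α p S c htrans, hS_of_ne (by omega),
    prod_eq_mul_mul_pow_card_sub_two (by simp; omega) (by simp; omega) (by omega : t - 1 ≠ t)
      (f := c) (r := r) fun l _ h₁ h₂ => (if_neg h₁).trans (if_neg h₂),
    hc₁, hc₂, card_range]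
  ring

end StickyChain

theorem forall_mem_update_singleton_iff {X : Type*} [Fintype X] [DecidableEq X] {n t : ℕ}
    (ht : t < n) {a b : X} (hab : a ≠ b) (x : Fin n → X) :
    (∀ i : Fin n, x i ∈ Function.update (fun _ => univ \ {a, b}) t {a} i)
      ↔ x ⟨t, ht⟩ = a ∧ (∀ i : Fin n, i.val ≠ t → x i ≠ a) ∧ ∀ i : Fin n, x i ≠ b := by
  have hmem : ∀ i : Fin n, x i ∈ Function.update (fun _ => univ \ {a, b}) t {a} i ↔
      ((i : ℕ) = t → x i = a) ∧ ((i : ℕ) ≠ t → x i ≠ a) ∧ x i ≠ b := by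
    intro i
    by_cases hi : (i : ℕ) = t
    · simp only [hi, Function.update_self, mem_singleton]; grind
    · simp [hi]
  simp only [hmem, forall_and]
  exact and_congr_left fun _ => ⟨fun h => h _ rfl, fun h i hi => (congrArg x (Fin.ext hi)).trans h⟩

/-- For the stationary geometric-sticky Markov chain of length `n`, distinct letters
`a ≠ b`, and `2 ≤ m ≤ n-1`, the probability that `X_m = a`, that `a` appears nowhere else,
and that `b` appears nowhere equals
`(1-α)² p_a (1-p_a-p_b)² (1-(1-α)(p_a+p_b))^(n-3)`. -/
theorem sticky_prob_singleton_other_absent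
    {X : Type*} [Fintype X] [DecidableEq X] (α : ℝ)
    (p : X → ℝ) (hsum : ∑ z, p z = 1)
    (n : ℕ) (m : ℕ) (hm1 : 2 ≤ m) (hm2 : m ≤ n - 1) (a b : X) (hab : a ≠ b) :
    ∑ x : Fin n → X,
        (if x ⟨m - 1, by omega⟩ = a ∧ (∀ i : Fin n, i.val ≠ m - 1 → x i ≠ a) ∧
            (∀ i : Fin n, x i ≠ b)
          then stickyProb α p x else 0)
      = (1 - α) ^ 2 * p a * (1 - p a - p b) ^ 2 * (1 - (1 - α) * (p a + p b)) ^ (n - 3) := by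
  have hA : ∑ z ∈ univ \ {a, b}, p z = 1 - p a - p b := by
    rw [sum_sdiff_eq_sub (subset_univ _), hsum, sum_pair hab]; ring
  obtain ⟨k, rfl⟩ : ∃ k, n = k + 1 := ⟨n - 1, by omega⟩
  calc _ = stickyTubeProb α p (Function.update (fun _ => univ \ {a, b}) (m - 1) {a}) (k + 1) :=
        sum_congr rfl fun x _ =>
          if_congr (forall_mem_update_singleton_iff (by omega) hab x).symm rfl rfl
    _ = _ := by
      rw [stickyTubeProb_update_singleton α p (by simp) (by omega) (by omega), hA,
        show k + 1 - 3 = k - 2 by omega]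
      ring
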